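/- arXiv:2304.06004 — 2 statements merged into one kernel-verified Lean document; each statement's English description precedes it below -/
import Mathlib

section
/- (Proposition 1, positivity of the astrocyte dynamics) Let u satisfy Assumption 1 and let x: [0,T) → ℝ³ be a solution of the astrocyte dynamics ẋ(t) = (F₁(x(t),u(t)), F₂(x(t)), F₃(x(t))) with x(0) ∈ ℝ³₊ (i.e., x₁(0) ≥ 0, x₂(0) ≥ 0, x₃(0) ≥ 0). Then x(t) ∈ ℝ³₊ for all t ∈ [0,T), i.e., the nonnegative orthant is forward invariant. -/
open Filter Topology Set

/-- If `f` has derivative `f'` at `t₀`, `f t₀ ≥ 0`, and `f' > 0` whenever `f t₀ = 0`,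
then `f` is positive just to the right of `t₀`. -/
lemma eventually_pos_right (f : ℝ → ℝ) (f' t₀ : ℝ) (hf : HasDerivAt f f' t₀)
    (h0 : 0 ≤ f t₀) (h' : f t₀ = 0 → 0 < f') : ∀ᶠ t in 𝓝[>] t₀, 0 < f t := by
  rcases h0.lt_or_eq with h | h
  · have h2 : ∀ᶠ t in 𝓝 t₀, 0 < f t := hf.continuousAt (Ioi_mem_nhds h)
    exact h2.filter_mono nhdsWithin_le_nhds
  · have hf' := h' h.symm
    have hs := hasDerivAt_iff_tendsto_slope.mp hf
    have h1 : ∀ᶠ t in 𝓝[≠] t₀, 0 < slope f t₀ t := hs (Ioi_mem_nhds hf')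
    have h2 : ∀ᶠ t in 𝓝[>] t₀, 0 < slope f t₀ t :=
      h1.filter_mono (nhdsWithin_mono _ (fun y hy => ne_of_gt hy))
    filter_upwards [h2, self_mem_nhdsWithin] with t ht ht'
    have htt : 0 < t - t₀ := sub_pos.mpr ht'
    have hm := mul_pos ht htt
    rw [slope_def_field, div_mul_cancel₀ _ (ne_of_gt htt)] at hm
    linarith [h.symm ▸ hm]

/-- Proposition 1: the astrocyte dynamics is a positive system, i.e. the
nonnegative orthant `ℝ³₊` is forward invariant for solutions with inputs
satisfying Assumption 1. -/
theorem astrocyte_positivity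
    (τ x₁star v₁ v₂ v₃ v₄ v₆ k₁ k₂ k₃ k₄ c₀ c₁ d₁ d₂ d₃ d₅ a₂ α Aglu : ℝ)
    (hτ : 0 < τ) (hx₁star : 0 < x₁star) (hv₁ : 0 < v₁) (hv₂ : 0 < v₂)
    (hv₃ : 0 < v₃) (hv₄ : 0 < v₄) (hv₆ : 0 < v₆)
    (hk₁ : 0 < k₁) (hk₂ : 0 < k₂) (hk₃ : 0 < k₃) (hk₄ : 0 < k₄)
    (hc₀ : 0 < c₀) (hc₁ : 0 < c₁)
    (hd₁ : 0 < d₁) (hd₂ : 0 < d₂) (hd₃ : 0 < d₃) (hd₅ : 0 < d₅)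
    (ha₂ : 0 < a₂) (hα₀ : 0 < α) (hα₁ : α < 1) (hA : 0 < Aglu)
    -- Assumption 1 on the input
    (u : ℝ → ℝ) (hu_cont : Continuous u)
    (hu : ∀ t, 0 ≤ u t ∧ u t ≤ Aglu)
    -- a solution of the astrocyte dynamics on [0, T)
    (T : ℝ) (x₁ x₂ x₃ : ℝ → ℝ)
    (hF₁ : ∀ t ∈ Set.Ico (0:ℝ) T,
      HasDerivAt x₁
        ((x₁star - x₁ t) / τ + v₄ * (x₂ t + (1 - α) * k₄) / (x₂ t + k₄) + u t) t)
    (hF₂ : ∀ t ∈ Set.Ico (0:ℝ) T,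
      HasDerivAt x₂
        (-k₁ * x₂ t
          + c₁ * v₁ * (x₁ t * x₂ t * x₃ t) ^ 3 * (c₀ / c₁ - (1 + 1 / c₁) * x₂ t)
              / ((x₁ t + d₁) ^ 3 * (x₂ t + d₅) ^ 3)
          - v₃ * (x₂ t) ^ 2 / (k₃ ^ 2 + (x₂ t) ^ 2)
          + v₆ * (x₁ t) ^ 2 / (k₂ ^ 2 + (x₁ t) ^ 2)
          + c₁ * v₂ * (c₀ / c₁ - (1 + 1 / c₁) * x₂ t)) t)
    (hF₃ : ∀ t ∈ Set.Ico (0:ℝ) T,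
      HasDerivAt x₃
        (a₂ * (d₂ * ((x₁ t + d₁) / (x₁ t + d₃)) * (1 - x₃ t) - x₂ t * x₃ t)) t)
    -- initial condition in the nonnegative orthant
    (h₀ : 0 ≤ x₁ 0 ∧ 0 ≤ x₂ 0 ∧ 0 ≤ x₃ 0) :
    ∀ t ∈ Set.Ico (0:ℝ) T, 0 ≤ x₁ t ∧ 0 ≤ x₂ t ∧ 0 ≤ x₃ t := by
  intro t ht
  by_contra hbad
  -- the set of "bad" times
  set B : Set ℝ := {s | s ∈ Set.Ico (0:ℝ) T ∧ (x₁ s < 0 ∨ x₂ s < 0 ∨ x₃ s < 0)} with hBdef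
  have htB : t ∈ B := by
    refine ⟨ht, ?_⟩
    by_contra h'
    push_neg at h'
    exact hbad ⟨h'.1, h'.2.1, h'.2.2⟩
  have hBne : B.Nonempty := ⟨t, htB⟩
  have hBbd : BddBelow B := ⟨0, fun b hb => hb.1.1⟩
  set t₀ := sInf B with ht₀def
  have ht₀0 : 0 ≤ t₀ := le_csInf hBne fun b hb => hb.1.1
  have ht₀T : t₀ < T := lt_of_le_of_lt (csInf_le hBbd htB) ht.2
  have ht₀mem : t₀ ∈ Set.Ico (0:ℝ) T := ⟨ht₀0, ht₀T⟩
  -- each coordinate is nonnegative at t₀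
  have hnn : ∀ f : ℝ → ℝ, ContinuousAt f t₀ → 0 ≤ f 0 →
      (∀ s, f s < 0 → s ∈ Set.Ico (0:ℝ) T → s ∈ B) → 0 ≤ f t₀ := by
    intro f hc h0 hB
    by_contra hneg
    push_neg at hneg
    have ht₀pos : 0 < t₀ := by
      rcases ht₀0.lt_or_eq with h | h
      · exact h
      · exact absurd hneg (not_lt.mpr (h ▸ h0))
    have hev : ∀ᶠ s in 𝓝 t₀, f s < 0 := hc (Iio_mem_nhds hneg)
    have hIoo : Set.Ioo (0:ℝ) t₀ ∈ 𝓝[<] t₀ :=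
      Ioo_mem_nhdsLT_of_mem ⟨ht₀pos, le_refl t₀⟩
    have hev' : ∀ᶠ s in 𝓝[<] t₀, f s < 0 ∧ s ∈ Set.Ioo (0:ℝ) t₀ :=
      (hev.filter_mono nhdsWithin_le_nhds).and hIoo
    obtain ⟨s, hs1, hs2⟩ := hev'.exists
    have hsB : s ∈ B := hB s hs1 ⟨le_of_lt hs2.1, lt_trans hs2.2 ht₀T⟩
    exact absurd (csInf_le hBbd hsB) (not_le.mpr hs2.2)
  have hx10 : 0 ≤ x₁ t₀ :=
    hnn x₁ (hF₁ t₀ ht₀mem).continuousAt h₀.1 (fun s h hs => ⟨hs, Or.inl h⟩)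
  have hx20 : 0 ≤ x₂ t₀ :=
    hnn x₂ (hF₂ t₀ ht₀mem).continuousAt h₀.2.1 (fun s h hs => ⟨hs, Or.inr (Or.inl h)⟩)
  have hx30 : 0 ≤ x₃ t₀ :=
    hnn x₃ (hF₃ t₀ ht₀mem).continuousAt h₀.2.2 (fun s h hs => ⟨hs, Or.inr (Or.inr h)⟩)
  -- strict quasipositivity of the vector field
  have e₁ : ∀ᶠ s in 𝓝[>] t₀, 0 < x₁ s := by
    refine eventually_pos_right _ _ _ (hF₁ t₀ ht₀mem) hx10 (fun h => ?_)
    have hA1 : 0 < (x₁star - x₁ t₀) / τ := div_pos (by rw [h]; linarith) hτ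
    have hA2 : 0 < v₄ * (x₂ t₀ + (1 - α) * k₄) / (x₂ t₀ + k₄) :=
      div_pos (mul_pos hv₄ (by nlinarith)) (by linarith)
    linarith [(hu t₀).1]
  have e₂ : ∀ᶠ s in 𝓝[>] t₀, 0 < x₂ s := by
    refine eventually_pos_right _ _ _ (hF₂ t₀ ht₀mem) hx20 (fun h => ?_)
    rw [h]
    have h1 : 0 ≤ v₆ * (x₁ t₀) ^ 2 / (k₂ ^ 2 + (x₁ t₀) ^ 2) := by positivity
    have h2 : 0 < c₁ * v₂ * (c₀ / c₁ - (1 + 1 / c₁) * 0) := by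
      rw [mul_zero, sub_zero]; positivity
    have h3 : c₁ * v₁ * (x₁ t₀ * 0 * x₃ t₀) ^ 3 * (c₀ / c₁ - (1 + 1 / c₁) * 0)
        / ((x₁ t₀ + d₁) ^ 3 * (0 + d₅) ^ 3) = 0 := by
      rw [mul_zero, zero_mul]; simp
    rw [h3]
    simp only [mul_zero, neg_zero, zero_add]
    have h4 : v₃ * (0:ℝ) ^ 2 / (k₃ ^ 2 + (0:ℝ) ^ 2) = 0 := by simp
    rw [h4]
    linarith
  have e₃ : ∀ᶠ s in 𝓝[>] t₀, 0 < x₃ s := by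
    refine eventually_pos_right _ _ _ (hF₃ t₀ ht₀mem) hx30 (fun h => ?_)
    rw [h]
    have h1 : 0 < x₁ t₀ + d₁ := by linarith
    have h2 : 0 < x₁ t₀ + d₃ := by linarith
    have h3 := div_pos h1 h2
    nlinarith [mul_pos (mul_pos ha₂ hd₂) h3]
  -- combine: no bad times just after t₀, contradicting t₀ = inf B
  have hev := e₁.and (e₂.and e₃)
  obtain ⟨w, hw, hsub⟩ := mem_nhdsGT_iff_exists_Ioo_subset.mp hev
  have hwle : w ≤ t₀ := by
    refine le_csInf hBne (fun b hb => ?_)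
    by_contra hbw
    push_neg at hbw
    have hbt₀ : t₀ ≤ b := csInf_le hBbd hb
    rcases eq_or_lt_of_le hbt₀ with h | h
    · rcases hb.2 with h' | h' | h' <;> rw [← h] at h' <;> linarith
    · have : b ∈ Set.Ioo t₀ w := ⟨h, hbw⟩
      have := hsub this
      rcases hb.2 with h' | h' | h' <;> simp only [Set.mem_setOf_eq] at this <;> linarith [this.1, this.2.1, this.2.2]
  exact absurd hw (not_lt.mpr hwle)
end

section
/- (Invariance of the unit interval for x₃) Let u satisfy Assumption 1 and let x: [0,T) → ℝ³ be a solution of the astrocyte dynamics ẋ(t) = (F₁(x(t),u(t)), F₂(x(t)), F₃(x(t))) with x(0) ∈ ℝ³₊ and x₃(0) ∈ [0,1]. Then x₃(t) ∈ [0,1] for all t ∈ [0,T). -/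
/-- If `f 0 ≥ 0` and `f' s > 0` whenever `f s = 0`, then `f ≥ 0` on `[0, b]`. -/
lemma nonneg_invariant_aux (f f' : ℝ → ℝ) (b : ℝ)
    (hf : ∀ s ∈ Set.Icc (0:ℝ) b, HasDerivAt f (f' s) s)
    (h0 : 0 ≤ f 0)
    (hb : ∀ s ∈ Set.Icc (0:ℝ) b, f s = 0 → 0 < f' s) :
    ∀ s ∈ Set.Icc (0:ℝ) b, 0 ≤ f s := by
  intro s hs
  have key : ∀ ⦃x⦄, x ∈ Set.Icc (0:ℝ) b → -f x ≤ (fun _ : ℝ => (0:ℝ)) x := by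
    refine image_le_of_deriv_right_lt_deriv_boundary
      (f := fun y => -f y) (f' := fun y => -f' y)
      (fun y hy => ((hf y hy).neg).continuousAt.continuousWithinAt)
      (fun y hy => ((hf y ⟨hy.1, le_of_lt hy.2⟩).neg).hasDerivWithinAt)
      (by simpa using h0)
      (B' := fun _ => (0:ℝ)) (fun y => hasDerivAt_const y 0) ?_
    intro y hy hfy
    have : f y = 0 := by simpa [neg_eq_zero] using hfy
    simpa using hb y ⟨hy.1, le_of_lt hy.2⟩ this
  simpa using key hs



/-- Invariance of the unit interval for x₃: along any solution of the astrocyte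
dynamics starting in the nonnegative orthant with x₃(0) ∈ [0,1], the gating
variable x₃ remains in [0,1]. -/
theorem astrocyte_x₃_unit_interval_invariant
    (τ x₁star v₁ v₂ v₃ v₄ v₆ k₁ k₂ k₃ k₄ c₀ c₁ d₁ d₂ d₃ d₅ a₂ α Aglu : ℝ)
    (hτ : 0 < τ) (hx₁star : 0 < x₁star) (hv₁ : 0 < v₁) (hv₂ : 0 < v₂)
    (hv₃ : 0 < v₃) (hv₄ : 0 < v₄) (hv₆ : 0 < v₆)
    (hk₁ : 0 < k₁) (hk₂ : 0 < k₂) (hk₃ : 0 < k₃) (hk₄ : 0 < k₄)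
    (hc₀ : 0 < c₀) (hc₁ : 0 < c₁)
    (hd₁ : 0 < d₁) (hd₂ : 0 < d₂) (hd₃ : 0 < d₃) (hd₅ : 0 < d₅)
    (ha₂ : 0 < a₂) (hα₀ : 0 < α) (hα₁ : α < 1) (hA : 0 < Aglu)
    -- Assumption 1 on the input
    (u : ℝ → ℝ) (hu_cont : Continuous u)
    (hu : ∀ t, 0 ≤ u t ∧ u t ≤ Aglu)
    -- a solution of the astrocyte dynamics on [0, T)
    (T : ℝ) (x₁ x₂ x₃ : ℝ → ℝ)
    (hF₁ : ∀ t ∈ Set.Ico (0:ℝ) T,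
      HasDerivAt x₁
        ((x₁star - x₁ t) / τ + v₄ * (x₂ t + (1 - α) * k₄) / (x₂ t + k₄) + u t) t)
    (hF₂ : ∀ t ∈ Set.Ico (0:ℝ) T,
      HasDerivAt x₂
        (-k₁ * x₂ t
          + c₁ * v₁ * (x₁ t * x₂ t * x₃ t) ^ 3 * (c₀ / c₁ - (1 + 1 / c₁) * x₂ t)
              / ((x₁ t + d₁) ^ 3 * (x₂ t + d₅) ^ 3)
          - v₃ * (x₂ t) ^ 2 / (k₃ ^ 2 + (x₂ t) ^ 2)
          + v₆ * (x₁ t) ^ 2 / (k₂ ^ 2 + (x₁ t) ^ 2)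
          + c₁ * v₂ * (c₀ / c₁ - (1 + 1 / c₁) * x₂ t)) t)
    (hF₃ : ∀ t ∈ Set.Ico (0:ℝ) T,
      HasDerivAt x₃
        (a₂ * (d₂ * ((x₁ t + d₁) / (x₁ t + d₃)) * (1 - x₃ t) - x₂ t * x₃ t)) t)
    -- initial condition in the nonnegative orthant with x₃(0) ∈ [0,1]
    (h₀ : 0 ≤ x₁ 0 ∧ 0 ≤ x₂ 0 ∧ 0 ≤ x₃ 0)
    (h₃0 : x₃ 0 ∈ Set.Icc (0:ℝ) 1) :
    ∀ t ∈ Set.Ico (0:ℝ) T, x₃ t ∈ Set.Icc (0:ℝ) 1 := by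
  intro t ht
  obtain ⟨ht0, htT⟩ := ht
  have hsub : Set.Icc (0:ℝ) t ⊆ Set.Ico (0:ℝ) T :=
    fun s hs => ⟨hs.1, lt_of_le_of_lt hs.2 htT⟩
  -- Step 1: x₂ ≥ 0 on [0,t]
  have hx₂nn : ∀ s ∈ Set.Icc (0:ℝ) t, 0 ≤ x₂ s := by
    refine nonneg_invariant_aux x₂ _ t (fun s hs => hF₂ s (hsub hs)) h₀.2.1 ?_
    intro s _ h0
    rw [h0]
    have hc₁' : c₁ ≠ 0 := ne_of_gt hc₁
    have hx1 : (0:ℝ) < k₂ ^ 2 + (x₁ s) ^ 2 := by positivity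
    simp only [mul_zero, zero_mul, zero_pow, ne_eq, OfNat.ofNat_ne_zero, not_false_eq_true,
      zero_div, sub_zero, neg_zero, zero_add]
    positivity
  -- Step 2: x₁ ≥ 0 on [0,t]
  have hx₁nn : ∀ s ∈ Set.Icc (0:ℝ) t, 0 ≤ x₁ s := by
    refine nonneg_invariant_aux x₁ _ t (fun s hs => hF₁ s (hsub hs)) h₀.1 ?_
    intro s hs h0
    have hx2 := hx₂nn s hs
    have hus := (hu s).1
    rw [h0]
    have h1 : 0 < (x₁star - 0) / τ := div_pos (by linarith) hτ
    have h2 : 0 ≤ v₄ * (x₂ s + (1 - α) * k₄) / (x₂ s + k₄) := by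
      have hnum : 0 ≤ x₂ s + (1 - α) * k₄ := by nlinarith
      have hden : 0 < x₂ s + k₄ := by linarith
      exact div_nonneg (mul_nonneg hv₄.le hnum) hden.le
    linarith
  -- Step 3: x₃ ≥ 0 on [0,t]
  have hx₃nn : ∀ s ∈ Set.Icc (0:ℝ) t, 0 ≤ x₃ s := by
    refine nonneg_invariant_aux x₃ _ t (fun s hs => hF₃ s (hsub hs)) h₀.2.2 ?_
    intro s hs h0
    have hx1 := hx₁nn s hs
    rw [h0]
    have hden : 0 < x₁ s + d₃ := by linarith
    have hnum : 0 < x₁ s + d₁ := by linarith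
    have : 0 < a₂ * (d₂ * ((x₁ s + d₁) / (x₁ s + d₃))) := by positivity
    simpa using this
  -- Step 4: x₃ ≤ 1 + ε(1+s) on [0,t] for every ε > 0
  have hub : ∀ ε > (0:ℝ), x₃ t ≤ 1 + ε * (1 + t) := by
    intro ε hε
    have hB : ∀ x : ℝ, HasDerivAt (fun s => 1 + ε * (1 + s)) ε x := by
      intro x
      have h := (HasDerivAt.const_mul ε ((hasDerivAt_id x).const_add (1:ℝ))).const_add (1:ℝ)
      simpa using h
    have key : ∀ ⦃s⦄, s ∈ Set.Icc (0:ℝ) t → x₃ s ≤ 1 + ε * (1 + s) := by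
      refine image_le_of_deriv_right_lt_deriv_boundary
        (f := x₃)
        (f' := fun s => a₂ * (d₂ * ((x₁ s + d₁) / (x₁ s + d₃)) * (1 - x₃ s) - x₂ s * x₃ s))
        (fun y hy => (hF₃ y (hsub hy)).continuousAt.continuousWithinAt)
        (fun y hy => (hF₃ y (hsub ⟨hy.1, le_of_lt hy.2⟩)).hasDerivWithinAt)
        ?_ hB ?_
      · have := h₃0.2
        nlinarith
      · intro s hs heq
        have hs' : s ∈ Set.Icc (0:ℝ) t := ⟨hs.1, le_of_lt hs.2⟩
        have hx1 := hx₁nn s hs'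
        have hx2 := hx₂nn s hs'
        have hx3 := hx₃nn s hs'
        have h13 : (1:ℝ) ≤ x₃ s := by
          rw [heq]; nlinarith [hs.1]
        have hr : 0 ≤ (x₁ s + d₁) / (x₁ s + d₃) := by
          have h1 : 0 ≤ x₁ s + d₁ := by linarith
          have h2 : 0 < x₁ s + d₃ := by linarith
          positivity
        have hA' : d₂ * ((x₁ s + d₁) / (x₁ s + d₃)) * (1 - x₃ s) ≤ 0 :=
          mul_nonpos_of_nonneg_of_nonpos (by positivity) (by linarith)
        have hB' : 0 ≤ x₂ s * x₃ s := mul_nonneg hx2 hx3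
        have : a₂ * (d₂ * ((x₁ s + d₁) / (x₁ s + d₃)) * (1 - x₃ s) - x₂ s * x₃ s) ≤ 0 :=
          mul_nonpos_of_nonneg_of_nonpos ha₂.le (by linarith)
        linarith
    exact key ⟨ht0, le_refl t⟩
  -- conclude
  refine ⟨hx₃nn t ⟨ht0, le_refl t⟩, ?_⟩
  refine le_of_forall_pos_le_add ?_
  intro δ hδ
  have h1t : (0:ℝ) < 1 + t := by linarith
  have h2 := hub (δ / (1 + t)) (div_pos hδ h1t)
  have heq : δ / (1 + t) * (1 + t) = δ := div_mul_cancel₀ δ (ne_of_gt h1t)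
  linarith
end
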